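/- Let x ∈ V* where V is a finite-dimensional JB*-triple with normalized associative inner product [·,·] (so [c,c]=1 for minimal tripotents c), identified with the functional x̃ = [·,x]. If x = Σ_{j=1}^r λ_j c_j is a spectral decomposition with λ_j ≥ 0 and c_j mutually orthogonal minimal tripotents, then the dual norm satisfies ‖x̃‖_* = Σ_{j=1}^r λ_j. -/

import Mathlib

/-!
Associativity and `[c, c] = 1` give `[y, c] = conj α` where `{c, y, c} = α c`, so
`|[y, c]| ≤ ‖{c, y, c}‖ ≤ ‖y‖` for every minimal tripotent `c`; summing yields
`‖x̃‖_* ≤ Σ λ_j`. Conversely `e = Σ c_j` is a tripotent, hence of norm one, and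
orthogonality gives `[e, c_j] = 1`, so `[e, x] = Σ λ_j` and the bound is attained.
-/

open scoped ComplexConjugate

class JBStarTriple (V : Type*) [NormedAddCommGroup V] [NormedSpace ℂ V] where
  tp : V → V → V → V
  box : V → V → V →L[ℂ] V
  box_apply : ∀ a b x : V, box a b x = tp a b x
  add_fst : ∀ a a' b c : V, tp (a + a') b c = tp a b c + tp a' b c
  smul_fst : ∀ (α : ℂ) (a b c : V), tp (α • a) b c = α • tp a b c
  symm_outer : ∀ a b c : V, tp a b c = tp c b a
  add_snd : ∀ a b b' c : V, tp a (b + b') c = tp a b c + tp a b' c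
  conj_snd : ∀ (α : ℂ) (a b c : V), tp a (α • b) c = conj α • tp a b c
  jordan_identity : ∀ a b x y z : V,
    tp a b (tp x y z) = tp (tp a b x) y z - tp x (tp b a y) z + tp x y (tp a b z)
  hermitian : ∀ (a : V) (t : ℝ), ‖NormedSpace.exp ((Complex.I * (t : ℂ)) • box a a)‖ = 1
  nonneg_spectrum : ∀ a : V, spectrum ℂ (box a a) ⊆ {z : ℂ | 0 ≤ z.re ∧ z.im = 0}
  norm_tp_le : ∀ a b c : V, ‖tp a b c‖ ≤ ‖a‖ * ‖b‖ * ‖c‖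
  norm_tp_self : ∀ a : V, ‖tp a a a‖ = ‖a‖ ^ 3

namespace JBStarTriple

variable {V : Type*} [NormedAddCommGroup V] [NormedSpace ℂ V] [JBStarTriple V]

def IsTripotent (e : V) : Prop := tp e e e = e

def Orthogonal (a b : V) : Prop := ∀ x : V, tp a b x = 0

def IsMinimalTripotent (e : V) : Prop :=
  IsTripotent e ∧ e ≠ 0 ∧ ∀ v : V, ∃ α : ℂ, tp e v e = α • e

def Peirce2 (e : V) : Set V := {x : V | tp e e x = x}

/-- `c ≤ e` for tripotents: `e - c` is a tripotent orthogonal to `c`. -/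
def TripLE (c e : V) : Prop := IsTripotent (e - c) ∧ Orthogonal (e - c) c

/-- The box operator as a `ℂ`-linear map. -/
def boxL (x y : V) : V →ₗ[ℂ] V where
  toFun v := tp x y v
  map_add' u v := by
    show tp x y (u + v) = tp x y u + tp x y v
    rw [symm_outer x y (u + v), add_fst, ← symm_outer x y u, ← symm_outer x y v]
  map_smul' α v := by
    show tp x y (α • v) = α • tp x y v
    rw [symm_outer x y (α • v), smul_fst, ← symm_outer x y v]

/-- The trace inner product `⟨x, y⟩ = Tr (x □ y)`. -/
noncomputable def trform (x y : V) : ℂ := LinearMap.trace ℂ V (boxL x y)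

end JBStarTriple

open JBStarTriple
open scoped ComplexConjugate

section Sesquilinear

variable {V : Type*} [AddCommMonoid V] [Module ℂ V] (ip : V → V → ℂ)

lemma ip_sum_fst (hlin : ∀ x : V, IsLinearMap ℂ fun y => ip y x) {ι : Type*} (s : Finset ι)
    (v : ι → V) (y : V) : ip (∑ i ∈ s, v i) y = ∑ i ∈ s, ip (v i) y :=
  map_sum (IsLinearMap.mk' _ (hlin y)) v s

lemma ip_sum_smul_snd (hlin : ∀ x : V, IsLinearMap ℂ fun y => ip y x)
    (hconj : ∀ x y : V, ip y x = conj (ip x y)) {ι : Type*} (s : Finset ι) (a : ι → ℂ)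
    (v : ι → V) (y : V) : ip y (∑ i ∈ s, a i • v i) = ∑ i ∈ s, conj (a i) * ip y (v i) := by
  rw [hconj, ip_sum_fst ip hlin, map_sum]
  refine Finset.sum_congr rfl fun i _ => ?_
  rw [(hlin y).map_smul, smul_eq_mul, map_mul, ← hconj]

end Sesquilinear

namespace JBStarTriple

variable {V : Type*} [NormedAddCommGroup V] [NormedSpace ℂ V] [JBStarTriple V]

lemma tp_sum_fst {ι : Type*} (s : Finset ι) (f : ι → V) (b c : V) :
    tp (∑ i ∈ s, f i) b c = ∑ i ∈ s, tp (f i) b c :=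
  map_sum (AddMonoidHom.mk' (fun a => tp a b c) (fun u v => add_fst u v b c)) f s

lemma tp_sum_snd {ι : Type*} (s : Finset ι) (a : V) (f : ι → V) (c : V) :
    tp a (∑ i ∈ s, f i) c = ∑ i ∈ s, tp a (f i) c :=
  map_sum (AddMonoidHom.mk' (fun b => tp a b c) (fun u v => add_snd a u v c)) f s

lemma tp_sum_trd {ι : Type*} (s : Finset ι) (a b : V) (f : ι → V) :
    tp a b (∑ i ∈ s, f i) = ∑ i ∈ s, tp a b (f i) := by
  rw [symm_outer, tp_sum_fst]
  exact Finset.sum_congr rfl fun i _ => symm_outer _ _ _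

lemma IsTripotent.norm_eq_one {e : V} (he : IsTripotent e) (hne : e ≠ 0) : ‖e‖ = 1 := by
  have h3 : ‖e‖ ^ 3 = ‖e‖ := by rw [← norm_tp_self, he]
  have h0 : 0 < ‖e‖ := norm_pos_iff.mpr hne
  have h2 : ‖e‖ ^ 2 = 1 := mul_left_cancel₀ h0.ne' (by linear_combination h3)
  exact (pow_eq_one_iff_of_nonneg h0.le two_ne_zero).mp h2

lemma isTripotent_sum {ι : Type*} [Fintype ι] {c : ι → V} (hc : ∀ i, IsTripotent (c i))
    (horth : ∀ i j, i ≠ j → Orthogonal (c i) (c j)) : IsTripotent (∑ i, c i) := by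
  classical
  unfold IsTripotent
  rw [tp_sum_fst]
  refine Finset.sum_congr rfl fun i _ => ?_
  rw [tp_sum_snd, Finset.sum_eq_single_of_mem i (Finset.mem_univ i)
      (fun j _ hji => horth i j hji.symm _),
    tp_sum_trd, Finset.sum_eq_single_of_mem i (Finset.mem_univ i)
      (fun k _ hki => by rw [symm_outer]; exact horth k i hki _)]
  exact hc i

section AssociativeForm

variable (ip : V → V → ℂ)

lemma ip_eq_zero_of_orthogonal (hlin : ∀ x : V, IsLinearMap ℂ fun y => ip y x)
    (hassoc : ∀ a b y z : V, ip (tp a b y) z = ip y (tp b a z)) {c d : V}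
    (hc : IsTripotent c) (hdc : Orthogonal d c) : ip d c = 0 := by
  have h := hassoc c c d c
  rw [hc, symm_outer, hdc c, (hlin c).map_zero] at h
  exact h.symm

lemma norm_ip_le_of_isMinimalTripotent (hlin : ∀ x : V, IsLinearMap ℂ fun y => ip y x)
    (hconj : ∀ x y : V, ip y x = conj (ip x y))
    (hassoc : ∀ a b y z : V, ip (tp a b y) z = ip y (tp b a z)) {c : V}
    (hc : IsMinimalTripotent c) (hcc : ip c c = 1) (y : V) : ‖ip y c‖ ≤ ‖y‖ := by
  obtain ⟨htrip, hne, hmin⟩ := hc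
  have hnorm : ‖c‖ = 1 := htrip.norm_eq_one hne
  obtain ⟨α, hα⟩ := hmin y
  have hcoeff : ip (tp c y c) c = α := by
    rw [hα, (hlin c).map_smul, hcc, smul_eq_mul, mul_one]
  have hconj_coeff : ip (tp c y c) c = conj (ip y c) := by
    rw [hassoc, symm_outer y c c, hconj, hassoc, htrip]
  calc ‖ip y c‖ = ‖α‖ := by rw [← hcoeff, hconj_coeff, Complex.norm_conj]
    _ = ‖tp c y c‖ := by rw [hα, norm_smul, hnorm, mul_one]
    _ ≤ ‖c‖ * ‖y‖ * ‖c‖ := norm_tp_le c y c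
    _ = ‖y‖ := by rw [hnorm, one_mul, mul_one]

lemma norm_ip_sum_smul_le (hlin : ∀ x : V, IsLinearMap ℂ fun y => ip y x)
    (hconj : ∀ x y : V, ip y x = conj (ip x y))
    (hassoc : ∀ a b y z : V, ip (tp a b y) z = ip y (tp b a z)) {ι : Type*} [Fintype ι]
    {lam : ι → ℝ} {c : ι → V} (hlam : ∀ j, 0 ≤ lam j) (hc : ∀ j, IsMinimalTripotent (c j))
    (hcc : ∀ j, ip (c j) (c j) = 1) (y : V) :
    ‖ip y (∑ j, (lam j : ℂ) • c j)‖ ≤ (∑ j, lam j) * ‖y‖ := by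
  rw [ip_sum_smul_snd ip hlin hconj, Finset.sum_mul]
  refine (norm_sum_le _ _).trans (Finset.sum_le_sum fun j _ => ?_)
  rw [Complex.conj_ofReal, norm_mul, Complex.norm_of_nonneg (hlam j)]
  exact mul_le_mul_of_nonneg_left
    (norm_ip_le_of_isMinimalTripotent ip hlin hconj hassoc (hc j) (hcc j) y) (hlam j)

lemma ip_sum_eq_one (hlin : ∀ x : V, IsLinearMap ℂ fun y => ip y x)
    (hassoc : ∀ a b y z : V, ip (tp a b y) z = ip y (tp b a z)) {ι : Type*} [Fintype ι]
    {c : ι → V} (hc : ∀ j, IsTripotent (c j)) (hcc : ∀ j, ip (c j) (c j) = 1)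
    (horth : ∀ i j, i ≠ j → Orthogonal (c i) (c j)) (j : ι) : ip (∑ i, c i) (c j) = 1 := by
  classical
  rw [ip_sum_fst ip hlin, Finset.sum_eq_single_of_mem j (Finset.mem_univ j)
    (fun i _ hij => ip_eq_zero_of_orthogonal ip hlin hassoc (hc j) (horth i j hij))]
  exact hcc j

lemma ip_sum_sum_smul (hlin : ∀ x : V, IsLinearMap ℂ fun y => ip y x)
    (hconj : ∀ x y : V, ip y x = conj (ip x y))
    (hassoc : ∀ a b y z : V, ip (tp a b y) z = ip y (tp b a z)) {ι : Type*} [Fintype ι]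
    (lam : ι → ℝ) {c : ι → V} (hc : ∀ j, IsTripotent (c j)) (hcc : ∀ j, ip (c j) (c j) = 1)
    (horth : ∀ i j, i ≠ j → Orthogonal (c i) (c j)) :
    ip (∑ i, c i) (∑ j, (lam j : ℂ) • c j) = ∑ j, lam j := by
  simp only [ip_sum_smul_snd ip hlin hconj, ip_sum_eq_one ip hlin hassoc hc hcc horth,
    Complex.conj_ofReal, mul_one, Complex.ofReal_sum]

end AssociativeForm

end JBStarTriple

theorem stmt14 {V : Type*} [NormedAddCommGroup V] [NormedSpace ℂ V] [JBStarTriple V]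
    (ip : V → V → ℂ)
    (hlin : ∀ x : V, IsLinearMap ℂ fun y => ip y x)
    (hconj : ∀ x y : V, ip y x = conj (ip x y))
    (hassoc : ∀ a b y z : V, ip (tp a b y) z = ip y (tp b a z))
    (hnormal : ∀ c : V, IsMinimalTripotent c → ip c c = 1)
    (n : ℕ) (lam : Fin n → ℝ) (c : Fin n → V)
    (hlam : ∀ j, 0 ≤ lam j) (hc : ∀ j, IsMinimalTripotent (c j))
    (horth : ∀ i j, i ≠ j → Orthogonal (c i) (c j))
    (x : V) (hx : x = ∑ j, (lam j : ℂ) • c j) :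
    sSup {r : ℝ | ∃ y : V, ‖y‖ = 1 ∧ r = ‖ip y x‖} = ∑ j, lam j := by
  subst hx
  have hcc (j : Fin n) : ip (c j) (c j) = 1 := hnormal _ (hc j)
  have hsum_nonneg : 0 ≤ ∑ j, lam j := Finset.sum_nonneg fun j _ => hlam j
  have hupper : ∀ r ∈ {r : ℝ | ∃ y : V, ‖y‖ = 1 ∧ r = ‖ip y (∑ j, (lam j : ℂ) • c j)‖},
      r ≤ ∑ j, lam j := by
    rintro _ ⟨y, hy, rfl⟩
    simpa only [hy, mul_one] using norm_ip_sum_smul_le ip hlin hconj hassoc hlam hc hcc y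
  refine le_antisymm (Real.sSup_le hupper hsum_nonneg) ?_
  rcases isEmpty_or_nonempty (Fin n) with hempty | hnonempty
  · rw [Finset.univ_eq_empty, Finset.sum_empty]
    exact Real.sSup_nonneg fun _ ⟨_, _, hr⟩ => hr ▸ norm_nonneg _
  obtain ⟨j₀⟩ := hnonempty
  have htrip (j : Fin n) : IsTripotent (c j) := (hc j).1
  have hne : ∑ i, c i ≠ 0 := fun h => by
    simpa [h, (hlin _).map_zero] using ip_sum_eq_one ip hlin hassoc htrip hcc horth j₀
  refine le_csSup ⟨_, hupper⟩ ⟨∑ i, c i, (isTripotent_sum htrip horth).norm_eq_one hne, ?_⟩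
  rw [ip_sum_sum_smul ip hlin hconj hassoc lam htrip hcc horth,
    Complex.norm_of_nonneg hsum_nonneg]
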